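/- arXiv:1606.08500 — 2 statements merged into one kernel-verified Lean document; each statement's English description precedes it below -/
import Mathlib

section
/- For every integer n ≥ 1, one has the polynomial identity n·(Hₙ² − H_{n−1}·H_{n+1}) = (Hₙ')² − Hₙ·Hₙ'', where Hₙ' and Hₙ'' denote the first and second derivatives of Hₙ. -/
open Real

noncomputable section

/-- The probabilists' Hermite polynomial of degree `k`, as a real function. -/
def hermiteFun (k : ℕ) (x : ℝ) : ℝ := Polynomial.aeval x (Polynomial.hermite k)

lemma deriv_hermiteFun (k : ℕ) :
    deriv (hermiteFun k) = fun x => Polynomial.aeval x (Polynomial.derivative (Polynomial.hermite k)) := by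
  funext x
  exact Polynomial.deriv_aeval (Polynomial.hermite k)

lemma hermiteFun_succ (k : ℕ) (x : ℝ) :
    hermiteFun (k + 1) x = x * hermiteFun k x
      - Polynomial.aeval x (Polynomial.derivative (Polynomial.hermite k)) := by
  simp [hermiteFun, Polynomial.hermite_succ]

lemma derivative_hermite_succ (m : ℕ) :
    Polynomial.derivative (Polynomial.hermite (m + 1))
      = (((m : ℤ) : Polynomial ℤ) + 1) * Polynomial.hermite m := by
  induction m with
  | zero => simp [Polynomial.hermite_succ]
  | succ k ih =>
    have hdk : Polynomial.derivative (Polynomial.hermite k)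
        = Polynomial.X * Polynomial.hermite k - Polynomial.hermite (k + 1) := by
      rw [Polynomial.hermite_succ k]; ring
    rw [Polynomial.hermite_succ (k + 1), Polynomial.derivative_sub, Polynomial.derivative_mul,
      Polynomial.derivative_X, one_mul, ih, Polynomial.derivative_mul, hdk]
    simp only [Polynomial.derivative_add, Polynomial.derivative_natCast,
      Polynomial.derivative_one, Polynomial.derivative_intCast, Polynomial.hermite_succ k]
    push_cast
    ring

lemma deriv_hermiteFun_succ (m : ℕ) :
    deriv (hermiteFun (m + 1)) = fun y => ((m : ℝ) + 1) * hermiteFun m y := by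
  funext y
  rw [deriv_hermiteFun, derivative_hermite_succ]
  simp [hermiteFun]

theorem turan_derivative_identity (n : ℕ) (hn : 1 ≤ n) (x : ℝ) :
    (n : ℝ) * (hermiteFun n x ^ 2 - hermiteFun (n - 1) x * hermiteFun (n + 1) x)
      = deriv (hermiteFun n) x ^ 2 - hermiteFun n x * deriv (deriv (hermiteFun n)) x := by
  obtain ⟨m, rfl⟩ := Nat.exists_eq_add_of_le hn
  have h1m : (1 : ℕ) + m = m + 1 := by omega
  rw [h1m]
  simp only [Nat.add_sub_cancel]
  -- first derivative of H_m, expressed via the recurrence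
  have hdm : deriv (hermiteFun m) x = x * hermiteFun m x - hermiteFun (m + 1) x := by
    rw [deriv_hermiteFun]
    have := hermiteFun_succ m x
    linarith [this]
  -- second derivative
  have B : deriv (deriv (hermiteFun (m + 1))) x
      = ((m : ℝ) + 1) * (x * hermiteFun m x - hermiteFun (m + 1) x) := by
    rw [deriv_hermiteFun_succ, deriv_const_mul _ (Polynomial.differentiableAt_aeval _), hdm]
  -- recurrence for H_{m+2}
  have C : hermiteFun (m + 1 + 1) x
      = x * hermiteFun (m + 1) x - ((m : ℝ) + 1) * hermiteFun m x := by
    rw [hermiteFun_succ, derivative_hermite_succ]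
    simp [hermiteFun]
  rw [B, C]
  simp only [deriv_hermiteFun_succ]
  push_cast
  ring
end
end

section
/- Define H₋₂(x) = 1 − x·G(x) and H₋₃(x) = ((1 + x²)·G(x) − x)/2, and let F : [0,∞) → ℝ be a continuous function with F(0) = 1 such that F(2·H₋₃(q)/H₋₂(q)) = G(q)/√(H₋₂(q)) for every q ∈ ℝ. Then for every fixed y ≥ 0, the function x ↦ √x · (F(y/x) − 1) is nonnegative and nonincreasing on (0,∞). -/
open Real MeasureTheory Filter Set Topology

noncomputable section

/-- The Hermite function of index −1 : `G x = e^{x²/2} ∫_x^∞ e^{−t²/2} dt`. -/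
def Gfun (x : ℝ) : ℝ := exp (x ^ 2 / 2) * ∫ t in Set.Ioi x, exp (-t ^ 2 / 2)

/-- The Hermite function of index −2. -/
def Hm2 (x : ℝ) : ℝ := 1 - x * Gfun x

/-- The Hermite function of index −3. -/
def Hm3 (x : ℝ) : ℝ := ((1 + x ^ 2) * Gfun x - x) / 2

def Iexp (q : ℝ) : ℝ := ∫ t in Set.Ioi q, exp (-t ^ 2 / 2)

lemma integrable_gauss : Integrable (fun t : ℝ => exp (-t ^ 2 / 2)) := by
  have h := integrable_exp_neg_mul_sq (b := (1:ℝ)/2) (by norm_num)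
  convert h using 2 with t
  ring_nf

lemma integrable_mul_gauss : Integrable (fun t : ℝ => t * exp (-t ^ 2 / 2)) := by
  have h := integrable_mul_exp_neg_mul_sq (b := (1:ℝ)/2) (by norm_num)
  convert h using 2 with t
  ring_nf

lemma cont_gauss : Continuous (fun t : ℝ => exp (-t ^ 2 / 2)) := by continuity

lemma Iexp_pos (q : ℝ) : 0 < Iexp q := by
  rw [Iexp, setIntegral_pos_iff_support_of_nonneg_ae]
  · have : (Function.support fun t : ℝ => exp (-t ^ 2 / 2)) = Set.univ := by
      ext t; simp [Function.support, (exp_pos _).ne']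
    rw [this, Set.univ_inter]
    simp [Real.volume_Ioi]
  · filter_upwards with t using (exp_pos _).le
  · exact integrable_gauss.integrableOn

lemma tendsto_gauss : Tendsto (fun q : ℝ => exp (-q ^ 2 / 2)) atTop (𝓝 0) := by
  have h1 : Tendsto (fun q : ℝ => q ^ 2 / 2) atTop atTop :=
    (tendsto_pow_atTop two_ne_zero).atTop_div_const (by norm_num)
  have := Real.tendsto_exp_atBot.comp (tendsto_neg_atBot_iff.mpr h1)
  convert this using 2 with q
  simp [Function.comp, neg_div]

lemma integral_mul_gauss (q : ℝ) :
    ∫ t in Set.Ioi q, t * exp (-t ^ 2 / 2) = exp (-q ^ 2 / 2) := by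
  have hderiv : ∀ x ∈ Set.Ici q, HasDerivAt (fun t : ℝ => -exp (-t ^ 2 / 2))
      (x * exp (-x ^ 2 / 2)) x := by
    intro x _
    have h1 : HasDerivAt (fun t : ℝ => -t ^ 2 / 2) (-x) x := by
      have := ((hasDerivAt_pow 2 x).neg).div_const 2
      refine this.congr_deriv ?_; ring
    have := (h1.exp).neg
    refine this.congr_deriv ?_; ring
  have htend : Tendsto (fun t : ℝ => -exp (-t ^ 2 / 2)) atTop (𝓝 0) := by
    simpa using tendsto_gauss.neg
  have := integral_Ioi_of_hasDerivAt_of_tendsto' hderiv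
    (integrable_mul_gauss.integrableOn) htend
  rw [this]; ring

lemma Iexp_le {q : ℝ} (hq : 0 < q) : q * Iexp q ≤ exp (-q ^ 2 / 2) := by
  rw [← integral_mul_gauss q, Iexp, ← integral_const_mul]
  apply setIntegral_mono_on
  · exact (integrable_gauss.const_mul q).integrableOn
  · exact integrable_mul_gauss.integrableOn
  · exact measurableSet_Ioi
  · intro t ht
    have : q ≤ t := le_of_lt ht
    have := exp_pos (-t ^ 2 / 2)
    nlinarith

lemma hasDerivAt_Iexp (q : ℝ) : HasDerivAt Iexp (-exp (-q ^ 2 / 2)) q := by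
  have heq : Iexp = fun q : ℝ =>
      ((∫ t, exp (-t ^ 2 / 2)) - ∫ t in Set.Iic (0:ℝ), exp (-t ^ 2 / 2))
        - ∫ t in (0:ℝ)..q, exp (-t ^ 2 / 2) := by
    funext x
    have h1 : (∫ t in Set.Iic x, exp (-t ^ 2 / 2)) + ∫ t in Set.Ioi x, exp (-t ^ 2 / 2)
        = ∫ t, exp (-t ^ 2 / 2) := by
      simpa [Set.compl_Iic] using
        integral_add_compl (measurableSet_Iic (a := x)) integrable_gauss
    have h2 : (∫ t in Set.Iic x, exp (-t ^ 2 / 2)) - ∫ t in Set.Iic (0:ℝ), exp (-t ^ 2 / 2)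
        = ∫ t in (0:ℝ)..x, exp (-t ^ 2 / 2) :=
      intervalIntegral.integral_Iic_sub_Iic integrable_gauss.integrableOn integrable_gauss.integrableOn
    rw [Iexp]; linarith
  rw [heq]
  have hI : HasDerivAt (fun x : ℝ => ∫ t in (0:ℝ)..x, exp (-t ^ 2 / 2)) (exp (-q ^ 2 / 2)) q :=
    intervalIntegral.integral_hasDerivAt_right integrable_gauss.intervalIntegrable
      (cont_gauss.stronglyMeasurableAtFilter _ _) cont_gauss.continuousAt
  simpa using (hI.const_sub _)

def Hm4 (q : ℝ) : ℝ := ((q ^ 2 + 2) - q * (q ^ 2 + 3) * Gfun q) / 6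
def Wfun (q : ℝ) : ℝ := Gfun q ^ 2 + q * Gfun q - 1
def Pfun (q : ℝ) : ℝ := (q ^ 2 - 1) * Gfun q ^ 2 - 3 * q * Gfun q + 2


lemma Gfun_eq (q : ℝ) : Gfun q = exp (q ^ 2 / 2) * Iexp q := rfl

lemma hasDerivAt_Gfun (q : ℝ) : HasDerivAt Gfun (q * Gfun q - 1) q := by
  have h1 : HasDerivAt (fun x : ℝ => exp (x ^ 2 / 2)) (q * exp (q ^ 2 / 2)) q := by
    have hp : HasDerivAt (fun x : ℝ => x ^ 2 / 2) q q := by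
      have := (hasDerivAt_pow 2 q).div_const 2
      refine this.congr_deriv ?_; ring
    have := hp.exp
    convert this using 1; ring
  have h2 := h1.mul (hasDerivAt_Iexp q)
  have heq : Gfun = fun x : ℝ => exp (x ^ 2 / 2) * Iexp x := rfl
  have hexp : exp (q ^ 2 / 2) * exp (-q ^ 2 / 2) = 1 := by
    rw [← exp_add]
    have : q ^ 2 / 2 + -q ^ 2 / 2 = 0 := by ring
    rw [this, exp_zero]
  rw [heq]
  refine h2.congr_deriv (Eq.symm ?_)
  show q * (exp (q ^ 2 / 2) * Iexp q) - 1 = _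
  linear_combination hexp

lemma Gfun_pos (q : ℝ) : 0 < Gfun q := mul_pos (exp_pos _) (Iexp_pos q)

lemma hasDerivAt_Hm2 (q : ℝ) : HasDerivAt Hm2 (-2 * Hm3 q) q := by
  have h := ((hasDerivAt_id q).mul (hasDerivAt_Gfun q)).const_sub 1
  have heq : Hm2 = fun x : ℝ => 1 - x * Gfun x := rfl
  rw [heq]
  refine h.congr_deriv ?_
  simp only [Hm3, id_eq]; ring

lemma hasDerivAt_Hm3 (q : ℝ) : HasDerivAt Hm3 (-3 * Hm4 q) q := by
  have h1 : HasDerivAt (fun x : ℝ => 1 + x ^ 2) (2 * q) q := by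
    have := (hasDerivAt_pow 2 q).const_add 1
    refine this.congr_deriv ?_; ring
  have h := ((h1.mul (hasDerivAt_Gfun q)).sub (hasDerivAt_id q)).div_const 2
  have heq : Hm3 = fun x : ℝ => ((1 + x ^ 2) * Gfun x - x) / 2 := rfl
  rw [heq]
  refine h.congr_deriv ?_
  simp only [Hm4, id_eq]; ring

lemma hasDerivAt_Wfun (q : ℝ) : HasDerivAt Wfun (q * Wfun q + (- Gfun q * Hm2 q)) q := by
  have h := (((hasDerivAt_Gfun q).pow 2).add ((hasDerivAt_id q).mul (hasDerivAt_Gfun q))).sub_const 1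
  have heq : Wfun = fun x : ℝ => Gfun x ^ 2 + x * Gfun x - 1 := rfl
  rw [heq]
  refine h.congr_deriv ?_
  simp only [Wfun, Hm2, id_eq]; ring

lemma hasDerivAt_Pfun (q : ℝ) :
    HasDerivAt Pfun (q * Pfun q + (-2 * Hm2 q * Hm3 q)) q := by
  have h1 : HasDerivAt (fun x : ℝ => x ^ 2 - 1) (2 * q) q := by
    have := (hasDerivAt_pow 2 q).sub_const 1
    refine this.congr_deriv ?_; ring
  have h2 : HasDerivAt (fun x : ℝ => 3 * x) (3 : ℝ) q := by
    simpa using (hasDerivAt_id q).const_mul 3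
  have h := ((h1.mul ((hasDerivAt_Gfun q).pow 2)).sub
      (h2.mul (hasDerivAt_Gfun q))).add_const 2
  have heq : Pfun = fun x : ℝ => (x ^ 2 - 1) * Gfun x ^ 2 - 3 * x * Gfun x + 2 := rfl
  rw [heq]
  refine h.congr_deriv ?_
  simp only [Pfun, Hm2, Hm3, id_eq, Pi.pow_apply]; ring

/-- ODE positivity principle. -/
lemma ode_pos {f f' : ℝ → ℝ} (hf : ∀ q, HasDerivAt f (f' q) q)
    (hneg : ∀ q, f' q - q * f q < 0)
    (hlim : Tendsto (fun q => exp (-q ^ 2 / 2) * f q) atTop (𝓝 0)) :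
    ∀ q, 0 < f q := by
  set g : ℝ → ℝ := fun q => exp (-q ^ 2 / 2) * f q with hg
  have hg' : ∀ q, HasDerivAt g (exp (-q ^ 2 / 2) * (f' q - q * f q)) q := by
    intro q
    have hp : HasDerivAt (fun x : ℝ => -x ^ 2 / 2) (-q) q := by
      have := ((hasDerivAt_pow 2 q).neg).div_const 2
      refine this.congr_deriv ?_
      ring
    have := (hp.exp).mul (hf q)
    refine this.congr_deriv ?_
    ring
  have hanti : StrictAnti g :=
    strictAnti_of_hasDerivAt_neg hg' (fun q => mul_neg_of_pos_of_neg (exp_pos _) (hneg q))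
  intro q
  have h0 : 0 ≤ g (q + 1) := by
    apply le_of_tendsto hlim
    filter_upwards [eventually_ge_atTop (q + 1)] with s hs
    exact hanti.antitone hs
  have : g (q + 1) < g q := hanti (by linarith)
  have hgq : 0 < g q := lt_of_le_of_lt h0 this
  have hgq' : 0 < exp (-q ^ 2 / 2) * f q := hgq
  nlinarith [exp_pos (-q ^ 2 / 2), hgq']

lemma EG (q : ℝ) : exp (-q ^ 2 / 2) * Gfun q = Iexp q := by
  rw [Gfun_eq, ← mul_assoc, ← exp_add]
  have : -q ^ 2 / 2 + q ^ 2 / 2 = 0 := by ring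
  rw [this, exp_zero, one_mul]

lemma tendsto_sq_gauss : Tendsto (fun q : ℝ => q ^ 2 * exp (-q ^ 2 / 2)) atTop (𝓝 0) := by
  apply squeeze_zero' (g := fun q : ℝ => q ^ 2 * exp (-q))
  · filter_upwards [eventually_ge_atTop (0:ℝ)] with q hq
    positivity
  · filter_upwards [eventually_ge_atTop (2:ℝ)] with q hq
    have : -q ^ 2 / 2 ≤ -q := by nlinarith
    have := exp_le_exp.mpr this
    nlinarith [sq_nonneg q, exp_pos (-q ^ 2 / 2)]
  · exact tendsto_pow_mul_exp_neg_atTop_nhds_zero 2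

lemma squeeze_sym {f : ℝ → ℝ} (C : ℝ)
    (h : ∀ᶠ q in atTop, |f q| ≤ C * (q ^ 2 * exp (-q ^ 2 / 2))) :
    Tendsto f atTop (𝓝 0) := by
  have hC : Tendsto (fun q : ℝ => C * (q ^ 2 * exp (-q ^ 2 / 2))) atTop (𝓝 0) := by
    simpa using tendsto_sq_gauss.const_mul C
  have hCn : Tendsto (fun q : ℝ => -(C * (q ^ 2 * exp (-q ^ 2 / 2)))) atTop (𝓝 0) := by
    simpa using hC.neg
  apply tendsto_of_tendsto_of_tendsto_of_le_of_le' hCn hC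
  · filter_upwards [h] with q hq using neg_le_of_abs_le hq
  · filter_upwards [h] with q hq using le_of_abs_le hq

lemma qG_le {q : ℝ} (hq : 0 < q) : q * Gfun q ≤ 1 := by
  have h := mul_le_mul_of_nonneg_left (Iexp_le hq) (exp_pos (q ^ 2 / 2)).le
  have h2 : exp (q ^ 2 / 2) * exp (-q ^ 2 / 2) = 1 := by
    rw [← exp_add]
    have : q ^ 2 / 2 + -q ^ 2 / 2 = 0 := by ring
    rw [this, exp_zero]
  rw [Gfun_eq]
  nlinarith [h, h2]

lemma abs_bound_lim {f : ℝ → ℝ} (C : ℝ)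
    (h : ∀ᶠ q in atTop, |f q| ≤ C * q ^ 2) :
    Tendsto (fun q => exp (-q ^ 2 / 2) * f q) atTop (𝓝 0) := by
  apply squeeze_sym C
  filter_upwards [h] with q hq
  have hE := exp_pos (-q ^ 2 / 2)
  rw [abs_mul, abs_of_pos hE]
  nlinarith [mul_le_mul_of_nonneg_right hq hE.le, abs_nonneg (f q)]

lemma lim_Hm2 : Tendsto (fun q => exp (-q ^ 2 / 2) * Hm2 q) atTop (𝓝 0) := by
  apply abs_bound_lim 2
  filter_upwards [eventually_ge_atTop (1:ℝ)] with q hq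
  have hqG := qG_le (lt_of_lt_of_le one_pos hq)
  have hG := Gfun_pos q
  simp only [Hm2]
  rw [abs_le]
  constructor <;> nlinarith

lemma Hm2_pos (q : ℝ) : 0 < Hm2 q :=
  ode_pos hasDerivAt_Hm2
    (fun q => by
      have := Gfun_pos q
      simp only [Hm2, Hm3]; nlinarith)
    lim_Hm2 q

lemma lim_Hm3 : Tendsto (fun q => exp (-q ^ 2 / 2) * Hm3 q) atTop (𝓝 0) := by
  apply abs_bound_lim 2
  filter_upwards [eventually_ge_atTop (1:ℝ)] with q hq
  have hqG := qG_le (lt_of_lt_of_le one_pos hq)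
  have hG := Gfun_pos q
  have hG1 : Gfun q ≤ 1 := by nlinarith
  simp only [Hm3]
  rw [abs_le]
  constructor <;> nlinarith

lemma Hm3_pos (q : ℝ) : 0 < Hm3 q :=
  ode_pos hasDerivAt_Hm3
    (fun q => by
      have := Hm2_pos q
      simp only [Hm2, Hm3, Hm4] at *; nlinarith)
    lim_Hm3 q

lemma Wfun_pos (q : ℝ) : 0 < Wfun q := by
  refine ode_pos hasDerivAt_Wfun
    (fun q => by
      have h1 := Gfun_pos q
      have h2 := Hm2_pos q
      nlinarith)
    ?_ q
  apply abs_bound_lim 3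
  filter_upwards [eventually_ge_atTop (1:ℝ)] with q hq
  have hqG := qG_le (lt_of_lt_of_le one_pos hq)
  have hG := Gfun_pos q
  have hG1 : Gfun q ≤ 1 := by nlinarith
  simp only [Wfun]
  rw [abs_le]
  constructor <;> nlinarith

lemma Pfun_pos (q : ℝ) : 0 < Pfun q := by
  refine ode_pos hasDerivAt_Pfun
    (fun q => by
      have h1 := Hm3_pos q
      have h2 := Hm2_pos q
      nlinarith)
    ?_ q
  apply abs_bound_lim 7
  filter_upwards [eventually_ge_atTop (1:ℝ)] with q hq
  have hqG := qG_le (lt_of_lt_of_le one_pos hq)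
  have hG := Gfun_pos q
  have hG1 : Gfun q ≤ 1 := by nlinarith
  have hq0 : (0:ℝ) < q := lt_of_lt_of_le one_pos hq
  have hqG0 : 0 ≤ q * Gfun q := by positivity
  have h2 : (q * Gfun q) ^ 2 ≤ 1 := by nlinarith
  simp only [Pfun]
  rw [abs_le]
  constructor <;> nlinarith [sq_nonneg (Gfun q), sq_nonneg q]

lemma hasDerivAt_Hm4 (q : ℝ) : HasDerivAt Hm4 (q * Hm4 q - Hm3 q) q := by
  have h1 : HasDerivAt (fun x : ℝ => x ^ 2 + 2) (2 * q) q := by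
    have := (hasDerivAt_pow 2 q).add_const 2
    refine this.congr_deriv ?_; ring
  have h2 : HasDerivAt (fun x : ℝ => x * (x ^ 2 + 3)) (3 * q ^ 2 + 3) q := by
    have := (hasDerivAt_id q).mul ((hasDerivAt_pow 2 q).add_const 3)
    refine this.congr_deriv ?_; simp [id_eq]; ring
  have h := ((h1.sub (h2.mul (hasDerivAt_Gfun q)))).div_const 6
  have heq : Hm4 = fun x : ℝ => (x ^ 2 + 2 - x * (x ^ 2 + 3) * Gfun x) / 6 := rfl
  rw [heq]
  refine h.congr_deriv ?_
  simp only [Hm4, Hm3, id_eq]; ring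

lemma Hm4_pos (q : ℝ) : 0 < Hm4 q := by
  refine ode_pos (f' := fun q => q * Hm4 q - Hm3 q) hasDerivAt_Hm4
    (fun q => by
      show q * Hm4 q - Hm3 q - q * Hm4 q < 0
      have := Hm3_pos q; linarith) ?_ q
  apply abs_bound_lim 2
  filter_upwards [eventually_ge_atTop (1:ℝ)] with q hq
  have hqG := qG_le (lt_of_lt_of_le one_pos hq)
  have hG := Gfun_pos q
  have hG1 : Gfun q ≤ 1 := by nlinarith
  have hq2 : (1:ℝ) ≤ q ^ 2 := by nlinarith
  have h3 : (q ^ 2 + 3) * (q * Gfun q) ≤ q ^ 2 + 3 :=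
    le_of_sub_nonneg (by nlinarith)
  have h4 : 0 ≤ (q ^ 2 + 3) * (q * Gfun q) := by positivity
  simp only [Hm4]
  rw [abs_le]
  constructor <;> [nlinarith; nlinarith]

def rfun (q : ℝ) : ℝ := 2 * Hm3 q / Hm2 q

lemma hasDerivAt_rfun (q : ℝ) : HasDerivAt rfun (-Pfun q / Hm2 q ^ 2) q := by
  have h := ((hasDerivAt_Hm3 q).const_mul 2).div (hasDerivAt_Hm2 q) (Hm2_pos q).ne'
  have heq : rfun = fun x : ℝ => 2 * Hm3 x / Hm2 x := rfl
  rw [heq]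
  refine h.congr_deriv ?_
  rw [div_eq_div_iff (pow_pos (Hm2_pos q) 2).ne' (pow_pos (Hm2_pos q) 2).ne']
  simp only [Pfun, Hm2, Hm3, Hm4]
  ring

lemma rfun_anti : StrictAnti rfun :=
  strictAnti_of_hasDerivAt_neg hasDerivAt_rfun
    (fun q => div_neg_of_neg_of_pos (neg_neg_iff_pos.mpr (Pfun_pos q)) (pow_pos (Hm2_pos q) 2))

lemma rfun_pos (q : ℝ) : 0 < rfun q := div_pos (by have := Hm3_pos q; linarith) (Hm2_pos q)

lemma sqrt_Hm2_le (q : ℝ) : Real.sqrt (Hm2 q) ≤ Gfun q := by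
  have h1 : Hm2 q ≤ Gfun q ^ 2 := by
    have := Wfun_pos q; simp only [Wfun, Hm2] at *; nlinarith
  calc Real.sqrt (Hm2 q) ≤ Real.sqrt (Gfun q ^ 2) := Real.sqrt_le_sqrt h1
    _ = Gfun q := by rw [Real.sqrt_sq (Gfun_pos q).le]

def psi (q : ℝ) : ℝ := (Gfun q - Real.sqrt (Hm2 q)) / Real.sqrt (2 * Hm3 q)

lemma psi_nonneg (q : ℝ) : 0 ≤ psi q :=
  div_nonneg (by linarith [sqrt_Hm2_le q]) (Real.sqrt_nonneg _)

lemma psi_anti : StrictAnti psi := by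
  have key : ∀ q : ℝ, HasDerivAt psi
      ((((q * Gfun q - 1) - (-2 * Hm3 q) / (2 * Real.sqrt (Hm2 q))) * Real.sqrt (2 * Hm3 q) -
        (Gfun q - Real.sqrt (Hm2 q)) * ((2 * (-3 * Hm4 q)) / (2 * Real.sqrt (2 * Hm3 q)))) /
        Real.sqrt (2 * Hm3 q) ^ 2) q := by
    intro q
    have hu : HasDerivAt (fun x => Gfun x - Real.sqrt (Hm2 x))
        ((q * Gfun q - 1) - (-2 * Hm3 q) / (2 * Real.sqrt (Hm2 q))) q :=
      (hasDerivAt_Gfun q).sub ((hasDerivAt_Hm2 q).sqrt (Hm2_pos q).ne')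
    have hv : HasDerivAt (fun x => Real.sqrt (2 * Hm3 x))
        ((2 * (-3 * Hm4 q)) / (2 * Real.sqrt (2 * Hm3 q))) q :=
      ((hasDerivAt_Hm3 q).const_mul 2).sqrt (by linarith [Hm3_pos q] : (2:ℝ) * Hm3 q ≠ 0)
    exact hu.div hv (Real.sqrt_pos.mpr (by linarith [Hm3_pos q])).ne'
  apply strictAnti_of_hasDerivAt_neg key
  intro q
  set s := Real.sqrt (Hm2 q) with hs
  set m := Real.sqrt (2 * Hm3 q) with hm
  have hspos : 0 < s := Real.sqrt_pos.mpr (Hm2_pos q)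
  have hmpos : 0 < m := Real.sqrt_pos.mpr (by linarith [Hm3_pos q])
  have hs2 : s ^ 2 = Hm2 q := Real.sq_sqrt (Hm2_pos q).le
  have hm2 : m ^ 2 = 2 * Hm3 q := Real.sq_sqrt (by linarith [Hm3_pos q])
  have hsG : s ≤ Gfun q := sqrt_Hm2_le q
  apply div_neg_of_neg_of_pos _ (pow_pos hmpos 2)
  set N := ((q * Gfun q - 1) - (-2 * Hm3 q) / (2 * s)) * m -
      (Gfun q - s) * ((2 * (-3 * Hm4 q)) / (2 * m)) with hN
  have hHm2 : Hm2 q = s ^ 2 := hs2.symm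
  have hHm3 : Hm3 q = m ^ 2 / 2 := by linarith
  have hqG : q * Gfun q - 1 = -s ^ 2 := by
    simp only [Hm2] at hHm2; linarith
  have hNms : N * (m * s) =
      (m ^ 2 / 2) * m ^ 2 - 3 * s ^ 2 * Hm4 q + s * (3 * Hm4 q * Gfun q) - s ^ 3 * m ^ 2 := by
    rw [hN, hHm3, hqG]
    field_simp
    ring
  have tA : 2 * Hm3 q ^ 2 - 3 * Hm2 q * Hm4 q = -Pfun q / 2 := by
    simp only [Hm2, Hm3, Hm4, Pfun]; ring
  have tB : 2 * Hm3 q ^ 2 - 3 * Hm2 q * Hm4 q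
      + Gfun q * (3 * Hm4 q * Gfun q - 2 * Hm2 q * Hm3 q) = -(Hm2 q * Pfun q) / 2 := by
    simp only [Hm2, Hm3, Hm4, Pfun]; ring
  have hT : N * (m * s) = (2 * Hm3 q ^ 2 - 3 * Hm2 q * Hm4 q)
      + s * (3 * Hm4 q * Gfun q - 2 * Hm2 q * Hm3 q) := by
    rw [hNms, hHm2, hHm3]; ring
  have hNneg : N * (m * s) < 0 := by
    rw [hT]
    rcases le_or_gt (3 * Hm4 q * Gfun q - 2 * Hm2 q * Hm3 q) 0 with hc | hc
    · have h1 : s * (3 * Hm4 q * Gfun q - 2 * Hm2 q * Hm3 q) ≤ 0 :=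
        mul_nonpos_of_nonneg_of_nonpos hspos.le hc
      have := Pfun_pos q
      linarith [tA]
    · have h1 : s * (3 * Hm4 q * Gfun q - 2 * Hm2 q * Hm3 q)
          ≤ Gfun q * (3 * Hm4 q * Gfun q - 2 * Hm2 q * Hm3 q) :=
        mul_le_mul_of_nonneg_right hsG hc.le
      have := Pfun_pos q
      have := Hm2_pos q
      nlinarith [tB]
  nlinarith [mul_pos hmpos hspos]

lemma cont_Gfun : Continuous Gfun :=
  continuous_iff_continuousAt.mpr fun q => (hasDerivAt_Gfun q).differentiableAt.continuousAt

lemma cont_rfun : Continuous rfun := by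
  apply Continuous.div
  · exact continuous_const.mul
      ((((continuous_const.add (continuous_pow 2)).mul cont_Gfun).sub continuous_id).div_const 2)
  · exact continuous_const.sub (continuous_id.mul cont_Gfun)
  · exact fun q => (Hm2_pos q).ne'

lemma id_G (q : ℝ) : 2 * Hm3 q + q * Hm2 q = Gfun q := by
  simp only [Hm2, Hm3]; ring

lemma id_sum (q : ℝ) : q * Hm3 q + 3 * Hm4 q = Hm2 q := by
  simp only [Hm2, Hm3, Hm4]; ring

lemma rfun_surj {u : ℝ} (hu : 0 < u) : ∃ q, rfun q = u := by
  set b := -u - 1 with hb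
  set a := 2 / u + 1 with ha
  have ha0 : 0 < a := by positivity
  have hba : b ≤ a := by nlinarith
  have hrb : u < rfun b := by
    have h1 : rfun b = Gfun b / Hm2 b - b := by
      rw [rfun, eq_sub_iff_add_eq, div_add' _ _ _ (Hm2_pos b).ne',
        div_eq_div_iff (Hm2_pos b).ne' (Hm2_pos b).ne']
      linear_combination (Hm2 b) * id_G b
    have h2 : 0 < Gfun b / Hm2 b := div_pos (Gfun_pos b) (Hm2_pos b)
    rw [h1, hb]; linarith
  have hra : rfun a < u := by
    have h1 : a * Hm3 a < Hm2 a := by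
      have := id_sum a
      have := Hm4_pos a
      linarith
    have h2 : rfun a < 2 / a := by
      rw [rfun, div_lt_div_iff₀ (Hm2_pos a) ha0]
      nlinarith
    have h3 : 2 / a < u := by
      rw [div_lt_iff₀ ha0]
      have : u * a = 2 + u := by rw [ha]; field_simp
      nlinarith
    linarith
  have := intermediate_value_Icc' hba cont_rfun.continuousOn
  have hmem : u ∈ Icc (rfun a) (rfun b) := ⟨hra.le, hrb.le⟩
  obtain ⟨q, _, hq⟩ := this hmem
  exact ⟨q, hq⟩

lemma main_eq (F : ℝ → ℝ)
    (hF : ∀ q : ℝ, F (2 * Hm3 q / Hm2 q) = Gfun q / Real.sqrt (Hm2 q))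
    {y x q : ℝ} (hy : 0 < y) (hx : 0 < x) (hq : rfun q = y / x) :
    Real.sqrt x * (F (y / x) - 1) = Real.sqrt y * psi q := by
  have hF' : F (y / x) = Gfun q / Real.sqrt (Hm2 q) := by
    rw [← hq]; exact hF q
  set s := Real.sqrt (Hm2 q) with hs
  set m := Real.sqrt (2 * Hm3 q) with hm
  have hspos : 0 < s := Real.sqrt_pos.mpr (Hm2_pos q)
  have hmpos : 0 < m := Real.sqrt_pos.mpr (by linarith [Hm3_pos q])
  have hs2 : s ^ 2 = Hm2 q := Real.sq_sqrt (Hm2_pos q).le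
  have hm2 : m ^ 2 = 2 * Hm3 q := Real.sq_sqrt (by linarith [Hm3_pos q])
  have hx_eq : x = (Real.sqrt y * s / m) ^ 2 := by
    have h1 : y / x = 2 * Hm3 q / Hm2 q := by rw [← hq]; rfl
    have h2 : y * Hm2 q = x * (2 * Hm3 q) := by
      rw [div_eq_div_iff hx.ne' (Hm2_pos q).ne'] at h1
      linarith
    have h3 : (Real.sqrt y * s / m) ^ 2 = y * s ^ 2 / m ^ 2 := by
      rw [div_pow, mul_pow, Real.sq_sqrt hy.le]
    rw [h3, hs2, hm2]
    rw [eq_div_iff (by linarith [Hm3_pos q] : (2:ℝ) * Hm3 q ≠ 0)]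
    linarith
  have hsx : Real.sqrt x = Real.sqrt y * s / m := by
    rw [hx_eq, Real.sqrt_sq (by positivity)]
  rw [hsx, hF', psi, ← hm, ← hs]
  field_simp

theorem F_monotonicity_half (F : ℝ → ℝ) (hFcont : ContinuousOn F (Set.Ici 0))
    (hF0 : F 0 = 1)
    (hF : ∀ q : ℝ, F (2 * Hm3 q / Hm2 q) = Gfun q / Real.sqrt (Hm2 q))
    (y : ℝ) (hy : 0 ≤ y) :
    (∀ x : ℝ, 0 < x → 0 ≤ Real.sqrt x * (F (y / x) - 1)) ∧
      AntitoneOn (fun x : ℝ => Real.sqrt x * (F (y / x) - 1)) (Set.Ioi 0) := by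
  rcases eq_or_lt_of_le hy with h0 | hy0
  · -- y = 0
    constructor
    · intro x hx
      rw [← h0, zero_div, hF0]
      simp
    · intro a _ b _ _
      rw [← h0]
      simp [zero_div, hF0]
  · constructor
    · intro x hx
      obtain ⟨q, hq⟩ := rfun_surj (div_pos hy0 hx)
      rw [main_eq F hF hy0 hx hq]
      exact mul_nonneg (Real.sqrt_nonneg y) (psi_nonneg q)
    · intro x1 hx1 x2 hx2 h12
      simp only [Set.mem_Ioi] at hx1 hx2
      obtain ⟨q1, hq1⟩ := rfun_surj (div_pos hy0 hx1)
      obtain ⟨q2, hq2⟩ := rfun_surj (div_pos hy0 hx2)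
      simp only
      rw [main_eq F hF hy0 hx1 hq1, main_eq F hF hy0 hx2 hq2]
      have hle : rfun q2 ≤ rfun q1 := by
        rw [hq1, hq2]
        gcongr
      have hq12 : q1 ≤ q2 := by
        by_contra hlt
        push_neg at hlt
        have := rfun_anti hlt
        linarith
      exact mul_le_mul_of_nonneg_left (psi_anti.antitone hq12) (Real.sqrt_nonneg y)
end
end
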